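/- arXiv:2511.03356 — 2 statements merged into one kernel-verified Lean document; each statement's English description precedes it below -/
import Mathlib

section
/- Let Ω₁, Ω₂ : ℝ → ℝ be smooth solutions of Ω'' + w(t)Ω = 0 with constant Wronskian W = Ω₁Ω₂' - Ω₁'Ω₂ ≠ 0. Let c₁, c₂, c₃ ∈ ℝ satisfy c₁c₃ - c₂² = k/W². If ρ(t) = √(c₁Ω₁(t)² + 2c₂Ω₁(t)Ω₂(t) + c₃Ω₂(t)²) is well-defined and positive on an interval I, then ρ satisfies the Ermakov equation ρ'' + w(t)ρ = k/ρ³ on I. -/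
private lemma main_alg (S T q wt r kk : ℝ) (hr : 0 < r) (hq : r ^ 2 = q)
    (hkey : q * S - T ^ 2 = kk) :
    ((2 * S - 2 * wt * q) * (2 * r) - (2 * T) * ((2 * T) / r)) / (2 * r) ^ 2 + wt * r
      = kk / r ^ 3 := by
  subst hq
  have hr0 : r ≠ 0 := hr.ne'
  field_simp
  linear_combination hkey

/-- Nonlinear superposition principle for the Ermakov equation: if Ω₁, Ω₂ solve the linear
equation Ω'' + wΩ = 0 with constant Wronskian W ≠ 0 and c₁c₃ - c₂² = k/W², then
ρ = √(c₁Ω₁² + 2c₂Ω₁Ω₂ + c₃Ω₂²), where positive, satisfies ρ'' + wρ = k/ρ³. -/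
theorem stmt12 (w Ω₁ Ω₂ : ℝ → ℝ) (c₁ c₂ c₃ k W : ℝ)
    (hΩ₁ : ContDiff ℝ (⊤ : ℕ∞) Ω₁) (hΩ₂ : ContDiff ℝ (⊤ : ℕ∞) Ω₂)
    (hode₁ : ∀ t, iteratedDeriv 2 Ω₁ t + w t * Ω₁ t = 0)
    (hode₂ : ∀ t, iteratedDeriv 2 Ω₂ t + w t * Ω₂ t = 0)
    (hW : ∀ t, Ω₁ t * deriv Ω₂ t - deriv Ω₁ t * Ω₂ t = W) (hW0 : W ≠ 0)
    (hc : c₁ * c₃ - c₂ ^ 2 = k / W ^ 2)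
    (I : Set ℝ) (hI : IsOpen I)
    (ρ : ℝ → ℝ)
    (hρ : ∀ t, ρ t = Real.sqrt (c₁ * (Ω₁ t) ^ 2 + 2 * c₂ * Ω₁ t * Ω₂ t + c₃ * (Ω₂ t) ^ 2))
    (hpos : ∀ t ∈ I, 0 < c₁ * (Ω₁ t) ^ 2 + 2 * c₂ * Ω₁ t * Ω₂ t + c₃ * (Ω₂ t) ^ 2) :
    ∀ t ∈ I, iteratedDeriv 2 ρ t + w t * ρ t = k / (ρ t) ^ 3 := by
  have hd₁ : Differentiable ℝ Ω₁ := hΩ₁.differentiable (by simp)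
  have hd₂ : Differentiable ℝ Ω₂ := hΩ₂.differentiable (by simp)
  have hcd₁ : ContDiff ℝ (↑(⊤ : ℕ∞)) (deriv Ω₁) :=
    (contDiff_infty_iff_deriv.mp (hΩ₁.of_le (by simp))).2
  have hcd₂ : ContDiff ℝ (↑(⊤ : ℕ∞)) (deriv Ω₂) :=
    (contDiff_infty_iff_deriv.mp (hΩ₂.of_le (by simp))).2
  have hd₁' : Differentiable ℝ (deriv Ω₁) := hcd₁.differentiable (by simp)
  have hd₂' : Differentiable ℝ (deriv Ω₂) := hcd₂.differentiable (by simp)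
  have hit2 : ∀ f : ℝ → ℝ, iteratedDeriv 2 f = deriv (deriv f) := by
    intro f
    rw [show (2 : ℕ) = 1 + 1 from rfl, iteratedDeriv_succ, iteratedDeriv_one]
  set Q : ℝ → ℝ := fun s => c₁ * (Ω₁ s) ^ 2 + 2 * c₂ * Ω₁ s * Ω₂ s + c₃ * (Ω₂ s) ^ 2 with hQdef
  set Q' : ℝ → ℝ := fun s =>
    2 * (c₁ * Ω₁ s * deriv Ω₁ s + c₂ * (deriv Ω₁ s * Ω₂ s + Ω₁ s * deriv Ω₂ s)
      + c₃ * Ω₂ s * deriv Ω₂ s) with hQ'def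
  have hQd : ∀ s, HasDerivAt Q (Q' s) s := by
    intro s
    have h1 := (hd₁ s).hasDerivAt
    have h2 := (hd₂ s).hasDerivAt
    have h := (((h1.pow 2).const_mul c₁).add ((h1.const_mul (2 * c₂)).mul h2)).add
      ((h2.pow 2).const_mul c₃)
    refine h.congr_deriv ?_
    push_cast
    ring
  intro t ht
  have hq : 0 < Q t := hpos t ht
  have hρd : ∀ s ∈ I, HasDerivAt ρ (Q' s / (2 * Real.sqrt (Q s))) s := by
    intro s hs
    have h0 : Q s ≠ 0 := (hpos s hs).ne'
    have hsq := (Real.hasDerivAt_sqrt h0).comp s (hQd s)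
    have hρeq : ρ = fun u => Real.sqrt (Q u) := funext hρ
    rw [hρeq]
    refine hsq.congr_deriv ?_
    ring
  have hev : deriv ρ =ᶠ[nhds t] fun s => Q' s / (2 * Real.sqrt (Q s)) := by
    filter_upwards [hI.mem_nhds ht] with s hs
    exact (hρd s hs).deriv
  have h2 : iteratedDeriv 2 ρ t
      = deriv (fun s => Q' s / (2 * Real.sqrt (Q s))) t := by
    rw [hit2]
    exact hev.deriv_eq
  -- second derivatives of Ω₁, Ω₂ at t
  have hA : deriv (deriv Ω₁) t = -(w t * Ω₁ t) := by
    have := hode₁ t; rw [hit2] at this; linarith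
  have hB : deriv (deriv Ω₂) t = -(w t * Ω₂ t) := by
    have := hode₂ t; rw [hit2] at this; linarith
  -- derivative of Q'
  have hQ'd : HasDerivAt Q'
      (2 * ((c₁ * (deriv Ω₁ t) ^ 2 + c₁ * Ω₁ t * deriv (deriv Ω₁) t)
        + c₂ * (deriv (deriv Ω₁) t * Ω₂ t + 2 * deriv Ω₁ t * deriv Ω₂ t
            + Ω₁ t * deriv (deriv Ω₂) t)
        + (c₃ * (deriv Ω₂ t) ^ 2 + c₃ * Ω₂ t * deriv (deriv Ω₂) t))) t := by
    have h1 := (hd₁ t).hasDerivAt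
    have h2' := (hd₂ t).hasDerivAt
    have h1' := (hd₁' t).hasDerivAt
    have h2'' := (hd₂' t).hasDerivAt
    have h := (((((h1.const_mul c₁).mul h1').add
      ((((h1'.mul h2').add (h1.mul h2''))).const_mul c₂)).add
      ((h2'.const_mul c₃).mul h2'')).const_mul 2)
    refine h.congr_deriv ?_
    ring
  have hden : HasDerivAt (fun s => 2 * Real.sqrt (Q s)) (Q' t / Real.sqrt (Q t)) t := by
    have h := ((Real.hasDerivAt_sqrt hq.ne').comp t (hQd t)).const_mul 2
    refine h.congr_deriv ?_
    have h0 : Real.sqrt (Q t) ≠ 0 := (Real.sqrt_pos.mpr hq).ne'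
    field_simp
  have hdenne : 2 * Real.sqrt (Q t) ≠ 0 := by positivity
  have hg := (hQ'd.div hden hdenne)
  rw [h2, show deriv (fun s => Q' s / (2 * Real.sqrt (Q s))) t = _ from hg.deriv, hρ t]
  have hr : 0 < Real.sqrt (Q t) := Real.sqrt_pos.mpr hq
  have hr2 : Real.sqrt (Q t) ^ 2 = Q t := Real.sq_sqrt hq.le
  have hk : k = (c₁ * c₃ - c₂ ^ 2) * W ^ 2 := by
    rw [hc]; field_simp
  have key : Q t * (c₁ * (deriv Ω₁ t) ^ 2 + 2 * c₂ * deriv Ω₁ t * deriv Ω₂ t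
        + c₃ * (deriv Ω₂ t) ^ 2)
      - (c₁ * Ω₁ t * deriv Ω₁ t + c₂ * (deriv Ω₁ t * Ω₂ t + Ω₁ t * deriv Ω₂ t)
        + c₃ * Ω₂ t * deriv Ω₂ t) ^ 2 = k := by
    rw [hk, ← hW t, hQdef]
    ring
  have := main_alg (c₁ * (deriv Ω₁ t) ^ 2 + 2 * c₂ * deriv Ω₁ t * deriv Ω₂ t
      + c₃ * (deriv Ω₂ t) ^ 2)
    (c₁ * Ω₁ t * deriv Ω₁ t + c₂ * (deriv Ω₁ t * Ω₂ t + Ω₁ t * deriv Ω₂ t)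
      + c₃ * Ω₂ t * deriv Ω₂ t)
    (Q t) (w t) (Real.sqrt (Q t)) k hr hr2 key
  rw [← this]
  rw [hA, hB]
  simp only [hQ'def, hQdef]
  ring_nf
end

section
/- Let v : ℝ × ℝ → ℝ be smooth with v(y,τ) ≠ 1/2 everywhere, and define u(x,t) = v(x + (3/2)t, t) - 1/2. Then v satisfies the extended Gardner equation v_τ + 6v(1-v)v_y + v_yyy + λ(τ+a)⁻²(v - 1/2)⁻⁴v_y = 0 if and only if u satisfies the extended mKdV equation u_t - 6u²u_x + u_xxx + λ(t+a)⁻²u⁻⁴u_x = 0. -/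
/-- Extended Slyunyaev–Pelinovsky transformation: u(x,t) = v(x + (3/2)t, t) - 1/2 maps the
extended Gardner equation v_τ + 6v(1-v)v_y + v_yyy + λ(τ+a)⁻²(v-1/2)⁻⁴v_y = 0 to the
extended mKdV equation u_t - 6u²u_x + u_xxx + λ(t+a)⁻²u⁻⁴u_x = 0, and conversely. -/
theorem stmt15 (v : ℝ → ℝ → ℝ) (a lam : ℝ)
    (hv : ContDiff ℝ (⊤ : ℕ∞) (fun p : ℝ × ℝ => v p.1 p.2))
    (hv12 : ∀ y τ : ℝ, v y τ ≠ 1 / 2)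
    (u : ℝ → ℝ → ℝ)
    (hu : ∀ x t : ℝ, u x t = v (x + (3 / 2) * t) t - 1 / 2) :
    (∀ y τ : ℝ, deriv (fun s => v y s) τ
        + 6 * v y τ * (1 - v y τ) * deriv (fun y' => v y' τ) y
        + iteratedDeriv 3 (fun y' => v y' τ) y
        + lam * ((τ + a) ^ 2)⁻¹ * ((v y τ - 1 / 2) ^ 4)⁻¹ * deriv (fun y' => v y' τ) y = 0)
      ↔ (∀ x t : ℝ, deriv (fun s => u x s) t
          - 6 * (u x t) ^ 2 * deriv (fun x' => u x' t) x
          + iteratedDeriv 3 (fun x' => u x' t) x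
          + lam * ((t + a) ^ 2)⁻¹ * ((u x t) ^ 4)⁻¹ * deriv (fun x' => u x' t) x = 0) := by
  set F : ℝ × ℝ → ℝ := fun p => v p.1 p.2 with hF
  have hFd : Differentiable ℝ F := hv.differentiable (by simp)
  -- partial derivatives via fderiv
  have hpart1 : ∀ y τ : ℝ, deriv (fun y' => v y' τ) y = fderiv ℝ F (y, τ) (1, 0) := by
    intro y τ
    have hc : HasDerivAt (fun y' : ℝ => ((y', τ) : ℝ × ℝ)) (1, 0) y :=
      HasDerivAt.prodMk (hasDerivAt_id y) (hasDerivAt_const y τ)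
    exact ((hFd (y, τ)).hasFDerivAt.comp_hasDerivAt y hc).deriv
  have hpart2 : ∀ y τ : ℝ, deriv (fun s => v y s) τ = fderiv ℝ F (y, τ) (0, 1) := by
    intro y τ
    have hc : HasDerivAt (fun s : ℝ => ((y, s) : ℝ × ℝ)) (0, 1) τ :=
      HasDerivAt.prodMk (hasDerivAt_const τ y) (hasDerivAt_id τ)
    exact ((hFd (y, τ)).hasFDerivAt.comp_hasDerivAt τ hc).deriv
  -- derivative of u in time
  have hut : ∀ x t : ℝ, deriv (fun s => u x s) t
      = (3 / 2) * deriv (fun y' => v y' t) (x + (3 / 2) * t)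
        + deriv (fun s => v (x + (3 / 2) * t) s) t := by
    intro x t
    have heq : (fun s => u x s) = fun s => v (x + (3 / 2) * s) s - 1 / 2 :=
      funext fun s => hu x s
    have hc : HasDerivAt (fun s : ℝ => ((x + (3 / 2) * s, s) : ℝ × ℝ)) ((3 / 2 : ℝ), 1) t := by
      have h1 : HasDerivAt (fun s : ℝ => x + (3 / 2) * s) (3 / 2) t := by
        simpa using ((hasDerivAt_id t).const_mul (3 / 2 : ℝ)).const_add x
      simpa using HasDerivAt.prodMk h1 (hasDerivAt_id t)
    have hcomp : HasDerivAt (fun s => v (x + (3 / 2) * s) s - 1 / 2)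
        (fderiv ℝ F (x + (3 / 2) * t, t) ((3 / 2 : ℝ), 1)) t :=
      (((hFd _).hasFDerivAt.comp_hasDerivAt t hc)).sub_const (1 / 2)
    rw [heq, hcomp.deriv, hpart1, hpart2]
    have hsplit : ((3 / 2 : ℝ), (1 : ℝ)) = (3 / 2 : ℝ) • ((1 : ℝ), (0 : ℝ)) + ((0 : ℝ), (1 : ℝ)) := by
      simp [Prod.ext_iff]
    rw [hsplit, map_add, map_smul, smul_eq_mul]
  -- spatial derivative of u
  have hux : ∀ x t : ℝ, deriv (fun x' => u x' t) x
      = deriv (fun y' => v y' t) (x + (3 / 2) * t) := by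
    intro x t
    have heq : (fun x' => u x' t) = fun x' => (fun y' => v y' t) (x' + (3 / 2) * t) - 1 / 2 :=
      funext fun x' => hu x' t
    rw [heq]
    rw [deriv_sub_const]
    exact deriv_comp_add_const (fun y' => v y' t) ((3 / 2) * t) x
  -- third spatial derivative of u
  have hux3 : ∀ x t : ℝ, iteratedDeriv 3 (fun x' => u x' t) x
      = iteratedDeriv 3 (fun y' => v y' t) (x + (3 / 2) * t) := by
    intro x t
    have heq : (fun x' => u x' t) = fun x' => (fun y' => v y' t) (x' + (3 / 2) * t) - 1 / 2 :=
      funext fun x' => hu x' t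
    have hg : Differentiable ℝ (fun y' => v y' t) := fun y => by
      have hc : HasDerivAt (fun y' : ℝ => ((y', t) : ℝ × ℝ)) (1, 0) y :=
        HasDerivAt.prodMk (hasDerivAt_id y) (hasDerivAt_const y t)
      exact ((hFd (y, t)).hasFDerivAt.comp_hasDerivAt y hc).differentiableAt
    rw [heq, iteratedDeriv_succ']
    have hderiv : deriv (fun x' => (fun y' => v y' t) (x' + (3 / 2) * t) - 1 / 2)
        = fun x' => deriv (fun y' => v y' t) (x' + (3 / 2) * t) := by
      funext x'
      rw [deriv_sub_const]
      exact deriv_comp_add_const (fun y' => v y' t) ((3 / 2) * t) x'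
    rw [hderiv]
    have h2 := iteratedDeriv_comp_add_const 2 (deriv (fun y' => v y' t)) ((3 / 2) * t)
    rw [h2]
    have h3 : iteratedDeriv 3 (fun y' => v y' t)
        = iteratedDeriv 2 (deriv (fun y' => v y' t)) :=
      iteratedDeriv_succ' (n := 2) (f := fun y' => v y' t)
    rw [h3]
  -- key pointwise identity
  have key : ∀ x t : ℝ,
      deriv (fun s => u x s) t - 6 * (u x t) ^ 2 * deriv (fun x' => u x' t) x
        + iteratedDeriv 3 (fun x' => u x' t) x
        + lam * ((t + a) ^ 2)⁻¹ * ((u x t) ^ 4)⁻¹ * deriv (fun x' => u x' t) x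
      = deriv (fun s => v (x + (3 / 2) * t) s) t
        + 6 * v (x + (3 / 2) * t) t * (1 - v (x + (3 / 2) * t) t)
            * deriv (fun y' => v y' t) (x + (3 / 2) * t)
        + iteratedDeriv 3 (fun y' => v y' t) (x + (3 / 2) * t)
        + lam * ((t + a) ^ 2)⁻¹ * ((v (x + (3 / 2) * t) t - 1 / 2) ^ 4)⁻¹
            * deriv (fun y' => v y' t) (x + (3 / 2) * t) := by
    intro x t
    rw [hut, hux, hux3, hu]
    ring
  constructor
  · intro h x t
    rw [key x t]
    exact h (x + (3 / 2) * t) t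
  · intro h y τ
    have := h (y - (3 / 2) * τ) τ
    rw [key (y - (3 / 2) * τ) τ] at this
    simpa using this
end
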